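/- The rule (SC_n) is GK(A_m)^r-admissible: for every n ≥ 2, if nΓ ⇒ nΔ is GK(A_m)^r-derivable, then Γ ⇒ Δ is GK(A_m)^r-derivable. -/

import Mathlib

/-- Formulas of the modal-multiplicative language ℒ_Am□ : variables, → (`imp`)
and □ (`box`). -/
inductive FormM : Type
  | var : ℕ → FormM
  | imp : FormM → FormM → FormM
  | box : FormM → FormM
  deriving DecidableEq

/-- The defined constant `0̄ := p₀ → p₀` (with `p₀` the variable of index 0). -/
def zeroM : FormM := .imp (.var 0) (.var 0)

/-- The defined negation `¬φ := φ → 0̄`. -/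
def negM (φ : FormM) : FormM := .imp φ zeroM

/-- The defined connective `φ & ψ := ¬φ → ψ`. -/
def conjM (φ ψ : FormM) : FormM := .imp (negM φ) ψ

/-- The iterated conjunctions: `0φ := 0̄` and `(n+1)φ := φ & (nφ)`. -/
def iterM : ℕ → FormM → FormM
  | 0, _ => zeroM
  | n + 1, φ => conjM φ (iterM n φ)

/-- A K(A)-model: a nonempty set of worlds, an accessibility relation, and a
valuation of the variables bounded by some `r ≥ 0`. -/
structure KAModel where
  World : Type
  ne : Nonempty World
  R : World → World → Prop
  V : ℕ → World → ℝ
  r : ℝ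
  hr : 0 ≤ r
  hV : ∀ p x, V p x ∈ Set.Icc (-r) r

/-- The valuation extended to all ℒ_Am□-formulas.  Note that `sInf ∅ = 0` in `ℝ`,
matching the convention that the infimum of the empty set is `0`. -/
noncomputable def KAModel.val (M : KAModel) : FormM → M.World → ℝ
  | .var p, x => M.V p x
  | .imp φ ψ, x => M.val ψ x - M.val φ x
  | .box φ, x => sInf {v : ℝ | ∃ y, M.R x y ∧ M.val φ y = v}

/-- K(A)-validity of an ℒ_Am□-formula. -/
def KAValid (φ : FormM) : Prop := ∀ (M : KAModel) (x : M.World), 0 ≤ M.val φ x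

/-- A sequent: an ordered pair of finite multisets of ℒ_Am□-formulas. -/
abbrev SeqM := Multiset FormM × Multiset FormM

/-- The restricted calculus GK(A_m)^r, with rules (ID), (→⇒), (⇒→) and
(□_{k,n}). -/
inductive GKAmR : SeqM → Prop
  | id (Δ : Multiset FormM) : GKAmR (Δ, Δ)
  | impL {Γ Δ : Multiset FormM} {φ ψ : FormM} :
      GKAmR (Γ + {ψ}, {φ} + Δ) → GKAmR (Γ + {FormM.imp φ ψ}, Δ)
  | impR {Γ Δ : Multiset FormM} {φ ψ : FormM} :
      GKAmR (Γ + {φ}, {ψ} + Δ) → GKAmR (Γ, {FormM.imp φ ψ} + Δ)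
  | boxkn {Γ Δ : Multiset FormM} {n : ℕ} (k : ℕ) (hk : 1 ≤ k)
      (Γ₀ : Multiset FormM) (Γs : Fin n → Multiset FormM) (φs : Fin n → FormM)
      (hsplit : k • Γ = Γ₀ + ∑ i, Γs i)
      (h0 : GKAmR (Γ₀, (0 : Multiset FormM)))
      (hi : ∀ i : Fin n, GKAmR (Γs i, k • ({φs i} : Multiset FormM))) :
      GKAmR (Δ + Γ.map FormM.box,
        (∑ i : Fin n, ({FormM.box (φs i)} : Multiset FormM)) + Δ)

/-!
Induction on the number of implications. Since `(→⇒)` and `(⇒→)` are invertible, an implication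
of `Γ` or `Δ` can be decomposed in all its `n` copies in `nΓ ⇒ nΔ`. Without implications,
`nΓ ⇒ nΔ` is either an axiom, and then `Γ = Δ`, or the conclusion of a box rule, whose premises
regroup, by mixing, into those of a box rule concluding `Γ ⇒ Δ`.
-/

open Multiset

namespace Multiset

variable {α β : Type*}

theorem exists_eq_add_of_map_eq_add (f : α → β) {s : Multiset α} {t₁ t₂ : Multiset β}
    (h : s.map f = t₁ + t₂) : ∃ s₁ s₂, s = s₁ + s₂ ∧ s₁.map f = t₁ ∧ s₂.map f = t₂ := by
  induction t₁ using Multiset.induction_on generalizing s with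
  | empty => exact ⟨0, s, by simp, by simp, by simpa using h⟩
  | cons b t₁ ih =>
    obtain ⟨a, ha, rfl⟩ := mem_map.mp (h ▸ mem_add.mpr (Or.inl (mem_cons_self b t₁)))
    obtain ⟨s', rfl⟩ := exists_cons_of_mem ha
    rw [map_cons, cons_add, cons_inj_right] at h
    obtain ⟨s₁, s₂, rfl, h₁, h₂⟩ := ih h
    exact ⟨a ::ₘ s₁, s₂, by rw [cons_add], by rw [map_cons, h₁], h₂⟩

theorem exists_groups_of_map_eq_nsmul (f : α → β) (n : ℕ) {D : Multiset β} {s : Multiset α}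
    (h : s.map f = n • D) :
    ∃ P : Multiset (Multiset α × β), P.map Prod.snd = D ∧ (P.map Prod.fst).sum = s ∧
      ∀ q ∈ P, q.1.map f = n • {q.2} := by
  induction D using Multiset.induction_on generalizing s with
  | empty => exact ⟨0, rfl, (by simpa using h : s = 0).symm, by simp⟩
  | cons b D ih =>
    rw [← singleton_add, smul_add] at h
    obtain ⟨s₁, s₂, rfl, h₁, h₂⟩ := exists_eq_add_of_map_eq_add f h
    obtain ⟨P, hPD, hPs, hP⟩ := ih h₂
    refine ⟨(s₁, b) ::ₘ P, by simp [hPD], by simp [hPs], fun q hq => ?_⟩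
    rcases mem_cons.mp hq with rfl | hq
    · exact h₁
    · exact hP q hq

theorem sum_map_singleton_apply (s : Multiset α) (f : α → β) :
    (s.map fun a => ({f a} : Multiset β)).sum = s.map f := by
  rw [← sum_map_singleton (s.map f), map_map]
  rfl

theorem exists_fin_map_eq (s : Multiset α) :
    ∃ (m : ℕ) (g : Fin m → α), Finset.univ.val.map g = s :=
  ⟨s.toList.length, s.toList.get, by rw [Fin.univ_val_map, List.ofFn_get, coe_toList]⟩

end Multiset

namespace FormM

def impCount : FormM → ℕ
  | var _ => 0
  | imp φ ψ => φ.impCount + ψ.impCount + 1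
  | box _ => 0

def unbox : FormM → Option FormM
  | box φ => some φ
  | _ => none

@[simp] theorem unbox_var (p : ℕ) : (var p).unbox = none := rfl
@[simp] theorem unbox_imp (φ ψ : FormM) : (imp φ ψ).unbox = none := rfl
@[simp] theorem unbox_box (φ : FormM) : (box φ).unbox = some φ := rfl

/-- The `φ` with `□φ` in the argument, rather than the formulas `□φ` themselves. -/
def boxPart : Multiset FormM →+ Multiset FormM where
  toFun S := S.filterMap unbox
  map_zero' := rfl
  map_add' := filterMap_add unbox

def nonBoxPart : Multiset FormM →+ Multiset FormM where
  toFun S := S.filter fun φ => φ.unbox = none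
  map_zero' := rfl
  map_add' := filter_add _

@[simp]
theorem boxPart_apply (S : Multiset FormM) : boxPart S = S.filterMap unbox := rfl

@[simp]
theorem nonBoxPart_apply (S : Multiset FormM) :
    nonBoxPart S = S.filter fun φ => φ.unbox = none := rfl

theorem boxPart_map_box (S : Multiset FormM) : boxPart (S.map box) = S := by
  simp [filterMap_map, Function.comp_def]

theorem nonBoxPart_map_box (S : Multiset FormM) : nonBoxPart (S.map box) = 0 := by
  simp [filter_map, Function.comp_def]

theorem nonBoxPart_add_boxPart (S : Multiset FormM) :
    nonBoxPart S + (boxPart S).map box = S := by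
  induction S using Multiset.induction_on with
  | empty => rfl
  | cons φ S ih =>
    cases φ with
    | var p =>
      simpa [filter_cons, filterMap_cons_none (f := unbox) _ _ (unbox_var p)] using ih
    | imp φ ψ =>
      simpa [filter_cons, filterMap_cons_none (f := unbox) _ _ (unbox_imp φ ψ)] using ih
    | box φ => simpa [filter_cons, filterMap_cons_some _ _ _ (unbox_box φ)] using ih

end FormM

namespace GKAmR

variable {Γ Δ : Multiset FormM} {φ ψ : FormM}

theorem of_eq {Γ' Δ' : Multiset FormM} (h : GKAmR (Γ, Δ)) (hΓ : Γ = Γ') (hΔ : Δ = Δ') :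
    GKAmR (Γ', Δ') :=
  hΓ ▸ hΔ ▸ h

theorem of_eq' {S T : SeqM} (h : GKAmR S) (hST : S = T) : GKAmR T :=
  hST ▸ h

/-- The rule `(□_{k,n})` with its premises `Γᵢ ⇒ k[φᵢ]` given as a multiset `B` of pairs
`(Γᵢ, φᵢ)`. -/
theorem box_blocks (k : ℕ) (hk : 1 ≤ k) (Δ Γ Γ₀ : Multiset FormM)
    (B : Multiset (Multiset FormM × FormM)) (hsplit : k • Γ = Γ₀ + (B.map Prod.fst).sum)
    (h0 : GKAmR (Γ₀, 0)) (hB : ∀ p ∈ B, GKAmR (p.1, k • {p.2})) :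
    GKAmR (Δ + Γ.map FormM.box, (B.map Prod.snd).map FormM.box + Δ) := by
  obtain ⟨m, g, rfl⟩ := B.exists_fin_map_eq
  have hfst : ∑ i, (g i).1 = ((Finset.univ.val.map g).map Prod.fst).sum := by
    rw [map_map, Finset.sum_eq_multiset_sum]
    rfl
  have hsnd : ∑ i, ({FormM.box (g i).2} : Multiset FormM) =
      ((Finset.univ.val.map g).map Prod.snd).map FormM.box := by
    rw [Finset.sum_eq_multiset_sum, sum_map_singleton_apply, map_map, map_map]
    rfl
  refine (boxkn k hk Γ₀ (fun i => (g i).1) (fun i => (g i).2) (hsplit.trans (by rw [hfst])) h0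
    fun i => hB (g i) (mem_map_of_mem g (Finset.mem_univ_val i))).of_eq rfl (by rw [hsnd])

@[elab_as_elim]
theorem blocks_induction {motive : (S : SeqM) → GKAmR S → Prop}
    (id : ∀ Δ, motive (Δ, Δ) (id Δ))
    (impL : ∀ {Γ Δ φ ψ} (h : GKAmR (Γ + {ψ}, {φ} + Δ)), motive _ h →
      motive (Γ + {FormM.imp φ ψ}, Δ) (impL h))
    (impR : ∀ {Γ Δ φ ψ} (h : GKAmR (Γ + {φ}, {ψ} + Δ)), motive _ h →
      motive (Γ, {FormM.imp φ ψ} + Δ) (impR h))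
    (box : ∀ {Δ Γ Γ₀ : Multiset FormM} {B : Multiset (Multiset FormM × FormM)} (k : ℕ)
      (hk : 1 ≤ k) (hsplit : k • Γ = Γ₀ + (B.map Prod.fst).sum) (h0 : GKAmR (Γ₀, 0)),
      motive _ h0 → (hB : ∀ p ∈ B, GKAmR (p.1, k • {p.2})) →
      motive _ (box_blocks k hk Δ Γ Γ₀ B hsplit h0 hB))
    {S : SeqM} (h : GKAmR S) : motive S h := by
  induction h with
  | id Δ => exact id Δ
  | impL h ih => exact impL h ih
  | impR h ih => exact impR h ih
  | boxkn k hk Γ₀ Γs φs hsplit h0 hi ih0 =>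
    let B := Finset.univ.val.map fun i => (Γs i, φs i)
    have hfst : ∑ i, Γs i = (B.map Prod.fst).sum := by
      rw [map_map, Finset.sum_eq_multiset_sum]
      rfl
    have hsnd : ∑ i, ({FormM.box (φs i)} : Multiset FormM) =
        (B.map Prod.snd).map FormM.box := by
      rw [Finset.sum_eq_multiset_sum, sum_map_singleton_apply, map_map, map_map]
      rfl
    have hB : ∀ p ∈ B, GKAmR (p.1, k • {p.2}) := by
      simp only [B, mem_map]
      rintro _ ⟨i, -, rfl⟩
      exact hi i
    convert box k hk (hsplit.trans (by rw [hfst])) h0 ih0 hB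

theorem add_id (Θ : Multiset FormM) {S : SeqM} (h : GKAmR S) : GKAmR (S + (Θ, Θ)) := by
  induction h using blocks_induction with
  | id Δ => exact id _
  | @impL Γ Δ φ ψ _ ih =>
    simp only [Prod.mk_add_mk] at ih ⊢
    exact (impL (Γ := Γ + Θ) (ih.of_eq (by abel) (by abel))).of_eq (by abel) rfl
  | @impR Γ Δ φ ψ _ ih =>
    simp only [Prod.mk_add_mk] at ih ⊢
    exact (impR (Δ := Δ + Θ) (ih.of_eq (by abel) (by abel))).of_eq rfl (by abel)
  | @box Δ Γ Γ₀ B k hk hsplit h0 _ hB =>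
    rw [Prod.mk_add_mk]
    exact (box_blocks k hk (Δ + Θ) Γ Γ₀ B hsplit h0 hB).of_eq (by abel) (by abel)

theorem impL_add (T : SeqM) (h : GKAmR ((Γ + {ψ}, {φ} + Δ) + T)) :
    GKAmR ((Γ + {FormM.imp φ ψ}, Δ) + T) := by
  obtain ⟨T₁, T₂⟩ := T
  simp only [Prod.mk_add_mk] at h ⊢
  exact (impL (Γ := Γ + T₁) (Δ := Δ + T₂) (h.of_eq (by abel) (by abel))).of_eq (by abel) rfl

theorem impR_add (T : SeqM) (h : GKAmR ((Γ + {φ}, {ψ} + Δ) + T)) :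
    GKAmR ((Γ, {FormM.imp φ ψ} + Δ) + T) := by
  obtain ⟨T₁, T₂⟩ := T
  simp only [Prod.mk_add_mk] at h ⊢
  exact (impR (Γ := Γ + T₁) (Δ := Δ + T₂) (h.of_eq (by abel) (by abel))).of_eq rfl (by abel)

theorem impL_nsmul_add (c : ℕ) (T : SeqM) (h : GKAmR (c • (Γ + {ψ}, {φ} + Δ) + T)) :
    GKAmR (c • (Γ + {FormM.imp φ ψ}, Δ) + T) := by
  induction c generalizing T with
  | zero => simpa using h
  | succ c ih =>
    rw [succ_nsmul, add_assoc] at h ⊢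
    exact ih _ ((impL_add _ (h.of_eq' (add_left_comm _ _ _))).of_eq' (add_left_comm _ _ _))

theorem impR_nsmul_add (c : ℕ) (T : SeqM) (h : GKAmR (c • (Γ + {φ}, {ψ} + Δ) + T)) :
    GKAmR (c • (Γ, {FormM.imp φ ψ} + Δ) + T) := by
  induction c generalizing T with
  | zero => simpa using h
  | succ c ih =>
    rw [succ_nsmul, add_assoc] at h ⊢
    exact ih _ ((impR_add _ (h.of_eq' (add_left_comm _ _ _))).of_eq' (add_left_comm _ _ _))

theorem nsmul {S : SeqM} (h : GKAmR S) (c : ℕ) : GKAmR (c • S) := by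
  induction h using blocks_induction with
  | id Δ => exact id _
  | impL _ ih => simpa using impL_nsmul_add c 0 (by simpa using ih)
  | impR _ ih => simpa using impR_nsmul_add c 0 (by simpa using ih)
  | @box Δ Γ Γ₀ B k hk hsplit _ ih0 hB =>
    refine (box_blocks k hk (c • Δ) (c • Γ) (c • Γ₀) (c • B) ?_ (by simpa using ih0)
      fun p hp => hB p (mem_of_mem_nsmul hp)).of_eq ?_ ?_
    · rw [smul_comm, hsplit, smul_add, Multiset.map_nsmul, sum_nsmul]
    · simp [smul_add, Multiset.map_nsmul]
    · simp [smul_add, Multiset.map_nsmul]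

/-- Two instances of `(□_{k,n})` and `(□_{k',n'})` combine into one of `(□_{k*k',·})`,
whose premises are those of the first multiplied by `k'` and those of the second by `k`. -/
theorem box_nsmul_add_box_nsmul {Δ₁ Γ₁ Γ₀ Δ₂ Γ₂ Γ₀' : Multiset FormM}
    {B B' : Multiset (Multiset FormM × FormM)} {k k' : ℕ} (hk : 1 ≤ k) (hk' : 1 ≤ k')
    (hsplit : k • Γ₁ = Γ₀ + (B.map Prod.fst).sum) (hsplit' : k' • Γ₂ = Γ₀' + (B'.map Prod.fst).sum)
    (hB : ∀ p ∈ B, GKAmR (p.1, k • {p.2})) (hB' : ∀ p ∈ B', GKAmR (p.1, k' • {p.2})) (a b : ℕ)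
    (h0 : GKAmR ((a * k') • Γ₀ + (b * k) • Γ₀', 0)) :
    GKAmR (a • (Δ₁ + Γ₁.map FormM.box, (B.map Prod.snd).map FormM.box + Δ₁) +
      b • (Δ₂ + Γ₂.map FormM.box, (B'.map Prod.snd).map FormM.box + Δ₂)) := by
  let C := a • B.map (fun p => (k' • p.1, p.2)) + b • B'.map (fun p => (k • p.1, p.2))
  have hC : ∀ p ∈ C, GKAmR (p.1, (k * k') • {p.2}) := by
    intro p hp
    rcases mem_add.mp hp with hp | hp <;> obtain ⟨q, hq, rfl⟩ := mem_map.mp (mem_of_mem_nsmul hp)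
    · simpa [mul_comm k, mul_smul] using (hB q hq).nsmul k'
    · simpa [mul_smul] using (hB' q hq).nsmul k
  have hCfst : (C.map Prod.fst).sum =
      (a * k') • (B.map Prod.fst).sum + (b * k) • (B'.map Prod.fst).sum := by
    simp only [C, Multiset.map_add, Multiset.map_nsmul, map_map, Function.comp_def, sum_add,
      sum_nsmul, sum_map_nsmul, mul_smul]
  have hsplitC : (k * k') • (a • Γ₁ + b • Γ₂) =
      ((a * k') • Γ₀ + (b * k) • Γ₀') + (C.map Prod.fst).sum := by
    have : (k * k') • (a • Γ₁ + b • Γ₂) = (a * k') • (k • Γ₁) + (b * k) • (k' • Γ₂) := by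
      simp only [smul_add, smul_smul]
      rw [show k * k' * a = a * k' * k by ring, show k * k' * b = b * k * k' by ring]
    rw [this, hCfst, hsplit, hsplit']
    simp only [smul_add]
    abel
  refine (box_blocks (k * k') (Nat.one_le_iff_ne_zero.mpr (by positivity))
    (a • Δ₁ + b • Δ₂) (a • Γ₁ + b • Γ₂) _ C hsplitC h0 hC).of_eq' ?_
  simp only [C, Prod.smul_mk, Prod.mk_add_mk, smul_add, Multiset.map_add, Multiset.map_nsmul,
    map_map, Function.comp_def]
  exact Prod.ext (by abel_nf) (by abel_nf)

/-- Mix, generalized to multiples of the two sequents: the induction has to pass through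
`box_nsmul_add_box_nsmul`, which multiplies the premises. -/
theorem nsmul_add_nsmul {S T : SeqM} (hS : GKAmR S) (hT : GKAmR T) (a b : ℕ) :
    GKAmR (a • S + b • T) := by
  induction hS using blocks_induction generalizing T a b with
  | id Δ => exact ((hT.nsmul b).add_id (a • Δ)).of_eq' (add_comm _ _)
  | impL _ ih => exact impL_nsmul_add a _ (ih hT a b)
  | impR _ ih => exact impR_nsmul_add a _ (ih hT a b)
  | @box Δ₁ Γ₁ Γ₀ B k hk hsplit h0 ih0 hB =>
    induction hT using blocks_induction generalizing a b with
    | id Δ =>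
      exact (((box_blocks k hk Δ₁ Γ₁ Γ₀ B hsplit h0 hB).nsmul a).add_id (b • Δ)).of_eq' rfl
    | impL _ ih =>
      rw [add_comm]
      exact impL_nsmul_add b _ ((ih a b).of_eq' (add_comm _ _))
    | impR _ ih =>
      rw [add_comm]
      exact impR_nsmul_add b _ ((ih a b).of_eq' (add_comm _ _))
    | box k' hk' hsplit' h0' _ hB' =>
      exact box_nsmul_add_box_nsmul hk hk' hsplit hsplit' hB hB' a b
        (by simpa using ih0 h0' (a * k') (b * k))

theorem add {Γ₁ Δ₁ Γ₂ Δ₂ : Multiset FormM} (h₁ : GKAmR (Γ₁, Δ₁)) (h₂ : GKAmR (Γ₂, Δ₂)) :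
    GKAmR (Γ₁ + Γ₂, Δ₁ + Δ₂) := by
  simpa using h₁.nsmul_add_nsmul h₂ 1 1

theorem sum_map {ι : Type*} (s : Multiset ι) (f g : ι → Multiset FormM)
    (h : ∀ i ∈ s, GKAmR (f i, g i)) : GKAmR ((s.map f).sum, (s.map g).sum) := by
  induction s using Multiset.induction_on with
  | empty => exact id 0
  | cons i s ih =>
    simpa using (h i (mem_cons_self i s)).add (ih fun j hj => h j (mem_cons_of_mem hj))

theorem inv_impL (h : GKAmR (Γ + {FormM.imp φ ψ}, Δ)) : GKAmR (Γ + {ψ}, {φ} + Δ) := by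
  generalize hS : (Γ + {FormM.imp φ ψ}, Δ) = S at h
  induction h using blocks_induction generalizing Γ Δ with
  | id Θ =>
    obtain ⟨rfl, rfl⟩ := Prod.mk.inj hS
    exact (impR (Γ := Γ + {ψ}) (Δ := {φ} + Γ) (φ := φ) (ψ := ψ)
      ((id (Γ + {ψ} + {φ})).of_eq rfl (by abel))).of_eq rfl (by abel)
  | @impL Γ' Δ' φ' ψ' h' ih =>
    obtain ⟨hΓ, rfl⟩ := Prod.mk.inj hS
    rw [add_comm Γ, add_comm Γ', singleton_add, singleton_add, cons_eq_cons] at hΓ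
    rcases hΓ with ⟨he, rfl⟩ | ⟨-, Γ'', rfl, rfl⟩
    · obtain ⟨rfl, rfl⟩ := FormM.imp.inj he
      exact h'
    · have := ih (Γ := Γ'' + {ψ'}) (Δ := {φ'} + Δ) (by simp only [← singleton_add]; abel_nf)
      exact (impL (Γ := Γ'' + {ψ}) (Δ := {φ} + Δ) (φ := φ') (ψ := ψ')
        (this.of_eq (by abel) (by abel))).of_eq (by simp only [← singleton_add]; abel) rfl
  | @impR Γ' Δ' φ' ψ' _ ih =>
    obtain ⟨rfl, rfl⟩ := Prod.mk.inj hS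
    have := ih (Γ := Γ + {φ'}) (Δ := {ψ'} + Δ') (by abel_nf)
    exact (impR (Γ := Γ + {ψ}) (Δ := {φ} + Δ') (φ := φ') (ψ := ψ')
      (this.of_eq (by abel) (by abel))).of_eq rfl (by abel)
  | @box Δc Γb Γ₀ B k hk hsplit h0 _ hB =>
    obtain ⟨hΓ, rfl⟩ := Prod.mk.inj hS
    have hmem : FormM.imp φ ψ ∈ Δc := by
      have := hΓ ▸ mem_add.mpr (Or.inr (mem_singleton_self _))
      exact (mem_add.mp this).resolve_right (by simp)
    obtain ⟨Δc, rfl⟩ := exists_cons_of_mem hmem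
    obtain rfl : Γ = Δc + Γb.map FormM.box :=
      add_right_cancel (hΓ.trans (by simp only [← singleton_add]; abel))
    have hax : GKAmR ({ψ}, {FormM.imp φ ψ} + {φ}) := impR (id _)
    exact ((box_blocks k hk Δc Γb Γ₀ B hsplit h0 hB).add hax).of_eq rfl
      (by simp only [← singleton_add]; abel)

theorem inv_impR (h : GKAmR (Γ, {FormM.imp φ ψ} + Δ)) : GKAmR (Γ + {φ}, {ψ} + Δ) := by
  generalize hS : (Γ, {FormM.imp φ ψ} + Δ) = S at h
  induction h using blocks_induction generalizing Γ Δ with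
  | id Θ =>
    obtain ⟨rfl, hΔ⟩ := Prod.mk.inj hS
    subst hΔ
    exact (impL (Γ := Δ + {φ}) (Δ := {ψ} + Δ) (φ := φ) (ψ := ψ)
      ((id (Δ + {φ} + {ψ})).of_eq rfl (by abel))).of_eq (by abel) rfl
  | @impL Γ' Δ' φ' ψ' _ ih =>
    obtain ⟨rfl, rfl⟩ := Prod.mk.inj hS
    have := ih (Γ := Γ' + {ψ'}) (Δ := {φ'} + Δ) (by abel_nf)
    exact (impL (Γ := Γ' + {φ}) (Δ := {ψ} + Δ) (φ := φ') (ψ := ψ')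
      (this.of_eq (by abel) (by abel))).of_eq (by abel) rfl
  | @impR Γ' Δ' φ' ψ' h' ih =>
    obtain ⟨rfl, hΔ⟩ := Prod.mk.inj hS
    rw [singleton_add, singleton_add, cons_eq_cons] at hΔ
    rcases hΔ with ⟨he, rfl⟩ | ⟨-, Δ'', rfl, rfl⟩
    · obtain ⟨rfl, rfl⟩ := FormM.imp.inj he
      exact h'
    · have := ih (Γ := Γ + {φ'}) (Δ := {ψ'} + Δ'') (by simp only [← singleton_add]; abel_nf)
      exact (impR (Γ := Γ + {φ}) (Δ := {ψ} + Δ'') (φ := φ') (ψ := ψ')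
        (this.of_eq (by abel) (by abel))).of_eq rfl (by simp only [← singleton_add]; abel)
  | @box Δc Γb Γ₀ B k hk hsplit h0 _ hB =>
    obtain ⟨rfl, hΔ⟩ := Prod.mk.inj hS
    have hmem : FormM.imp φ ψ ∈ Δc := by
      have := hΔ ▸ mem_add.mpr (Or.inl (mem_singleton_self _))
      exact (mem_add.mp this).resolve_left (by simp)
    obtain ⟨Δc, rfl⟩ := exists_cons_of_mem hmem
    obtain rfl : Δ = (B.map Prod.snd).map FormM.box + Δc :=
      add_left_cancel (hΔ.trans (by simp only [← singleton_add]; abel))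
    have hax : GKAmR ({φ} + {FormM.imp φ ψ}, {ψ}) := impL (id _)
    exact ((box_blocks k hk Δc Γb Γ₀ B hsplit h0 hB).add hax).of_eq
      (by simp only [← singleton_add]; abel) (by abel)

theorem inv_impL_nsmul (c : ℕ) (h : GKAmR (Γ + c • {FormM.imp φ ψ}, Δ)) :
    GKAmR (Γ + c • {ψ}, c • {φ} + Δ) := by
  induction c generalizing Γ Δ with
  | zero => simpa using h
  | succ c ih =>
    have h' := inv_impL (Γ := Γ + c • {FormM.imp φ ψ}) (h.of_eq (by rw [succ_nsmul]; abel) rfl)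
    exact (ih (Γ := Γ + {ψ}) (Δ := {φ} + Δ) (h'.of_eq (by abel) rfl)).of_eq
      (by rw [succ_nsmul]; abel) (by rw [succ_nsmul]; abel)

theorem inv_impR_nsmul (c : ℕ) (h : GKAmR (Γ, c • {FormM.imp φ ψ} + Δ)) :
    GKAmR (Γ + c • {φ}, c • {ψ} + Δ) := by
  induction c generalizing Γ Δ with
  | zero => simpa using h
  | succ c ih =>
    have h' := inv_impR (Δ := c • {FormM.imp φ ψ} + Δ) (h.of_eq rfl (by rw [succ_nsmul]; abel))
    exact (ih (Γ := Γ + {φ}) (Δ := {ψ} + Δ) (h'.of_eq rfl (by abel))).of_eq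
      (by rw [succ_nsmul]; abel) (by rw [succ_nsmul]; abel)

/-- The `n` premises `Γᵢ ⇒ k[φ]` with a common `φ` are mixed into one premise
`Σ Γᵢ ⇒ (k * n)[φ]`. -/
theorem exists_merged_blocks (k n : ℕ) {B : Multiset (Multiset FormM × FormM)}
    {D : Multiset FormM} (hBD : B.map Prod.snd = n • D)
    (hB : ∀ p ∈ B, GKAmR (p.1, k • {p.2})) :
    ∃ C : Multiset (Multiset FormM × FormM), C.map Prod.snd = D ∧
      (C.map Prod.fst).sum = (B.map Prod.fst).sum ∧ ∀ p ∈ C, GKAmR (p.1, (k * n) • {p.2}) := by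
  obtain ⟨P, hPD, hPB, hP⟩ := exists_groups_of_map_eq_nsmul Prod.snd n hBD
  refine ⟨P.map fun q => ((q.1.map Prod.fst).sum, q.2), by rw [map_map]; exact hPD, ?_, ?_⟩
  · rw [← hPB]
    change _ = ((join (P.map Prod.fst)).map Prod.fst).sum
    rw [map_join, sum_join, map_map, map_map, map_map]
    rfl
  · simp only [mem_map]
    rintro _ ⟨q, hq, rfl⟩
    have := sum_map q.1 Prod.fst (fun p => k • {p.2}) fun p hp =>
      hB p (hPB ▸ mem_join.mpr ⟨q.1, mem_map_of_mem _ hq, hp⟩)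
    rwa [sum_map_nsmul, sum_map_singleton_apply, hP q hq, smul_smul] at this

open FormM

/-- The box formulas of `Γ` become the principal formulas of an instance of `(□_{k*n,·})`
concluding `Γ ⇒ Δ`. -/
theorem of_nsmul_eq_box {n : ℕ} (hn : n ≠ 0) {Δc Γb Γ₀ : Multiset FormM}
    {B : Multiset (Multiset FormM × FormM)} (k : ℕ) (hk : 1 ≤ k)
    (hsplit : k • Γb = Γ₀ + (B.map Prod.fst).sum) (h0 : GKAmR (Γ₀, 0))
    (hB : ∀ p ∈ B, GKAmR (p.1, k • {p.2})) (hΓ : n • Γ = Δc + Γb.map box)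
    (hΔ : n • Δ = (B.map Prod.snd).map box + Δc) : GKAmR (Γ, Δ) := by
  have hnon : nonBoxPart Δ = nonBoxPart Γ := nsmul_right_injective hn <| by
    dsimp only
    rw [← _root_.map_nsmul, ← _root_.map_nsmul, hΓ, hΔ, _root_.map_add, _root_.map_add,
      nonBoxPart_map_box, nonBoxPart_map_box, zero_add, add_zero]
  have hG : n • boxPart Γ = boxPart Δc + Γb := by
    rw [← _root_.map_nsmul, hΓ, _root_.map_add, boxPart_map_box]
  -- the context formulas `□ψ` of `Δc` are padded with the premises `k[ψ] ⇒ k[ψ]`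
  let B' := B + (boxPart Δc).map fun ψ => (k • {ψ}, ψ)
  have hB'D : B'.map Prod.snd = n • boxPart Δ := by
    rw [← _root_.map_nsmul, hΔ, _root_.map_add, boxPart_map_box, Multiset.map_add, map_map]
    simp [Function.comp_def]
  have hB' : ∀ p ∈ B', GKAmR (p.1, k • {p.2}) := by
    intro p hp
    rcases mem_add.mp hp with hp | hp
    · exact hB p hp
    · obtain ⟨ψ, -, rfl⟩ := mem_map.mp hp
      exact id _
  obtain ⟨C, hCD, hCB', hC⟩ := exists_merged_blocks k n hB'D hB'
  have hsplit' : (k * n) • boxPart Γ = Γ₀ + (C.map Prod.fst).sum := by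
    rw [hCB', mul_smul, hG, smul_add, hsplit, Multiset.map_add, sum_add, map_map]
    simp [Function.comp_def, sum_map_nsmul, add_comm, add_left_comm]
  have := box_blocks (k * n) (Nat.one_le_iff_ne_zero.mpr (by positivity)) (nonBoxPart Γ)
    (boxPart Γ) Γ₀ C hsplit' h0 hC
  rwa [nonBoxPart_add_boxPart, hCD, ← hnon, add_comm, nonBoxPart_add_boxPart] at this

theorem of_nsmul_of_forall_not_imp {n : ℕ} (hn : n ≠ 0) (hΓ : ∀ φ ψ, imp φ ψ ∉ Γ)
    (hΔ : ∀ φ ψ, imp φ ψ ∉ Δ) (h : GKAmR (n • Γ, n • Δ)) : GKAmR (Γ, Δ) := by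
  generalize hS : (n • Γ, n • Δ) = S at h
  induction h using blocks_induction with
  | id Θ =>
    obtain ⟨h₁, h₂⟩ := Prod.mk.inj hS
    rw [nsmul_right_injective hn (h₁.trans h₂.symm)]
    exact id Δ
  | @impL Γ' Δ' φ ψ =>
    have : imp φ ψ ∈ n • Γ := (Prod.mk.inj hS).1 ▸ mem_add.mpr (Or.inr (mem_singleton_self _))
    exact absurd (mem_of_mem_nsmul this) (hΓ φ ψ)
  | @impR Γ' Δ' φ ψ =>
    have : imp φ ψ ∈ n • Δ := (Prod.mk.inj hS).2 ▸ mem_add.mpr (Or.inl (mem_singleton_self _))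
    exact absurd (mem_of_mem_nsmul this) (hΔ φ ψ)
  | box k hk hsplit h0 _ hB =>
    obtain ⟨h₁, h₂⟩ := Prod.mk.inj hS
    exact of_nsmul_eq_box hn k hk hsplit h0 hB h₁ h₂

theorem of_nsmul {n : ℕ} (hn : n ≠ 0) (h : GKAmR (n • Γ, n • Δ)) : GKAmR (Γ, Δ) := by
  induction hm : ((Γ + Δ).map impCount).sum using Nat.strong_induction_on generalizing Γ Δ with
  | _ m ih =>
    by_cases hΓ : ∃ φ ψ, imp φ ψ ∈ Γ
    · obtain ⟨φ, ψ, hmem⟩ := hΓ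
      obtain ⟨Γ, rfl⟩ := exists_cons_of_mem hmem
      have h' := inv_impL_nsmul n (Γ := n • Γ)
        (h.of_eq (by rw [← singleton_add, smul_add, add_comm]) rfl)
      refine (impL (ih _ ?_ (h'.of_eq (smul_add _ _ _).symm (smul_add _ _ _).symm) rfl)).of_eq
        (by rw [← singleton_add, add_comm]) rfl
      rw [← hm]
      simp only [Multiset.map_add, map_cons, map_singleton, sum_add, sum_cons, sum_singleton,
        impCount]
      omega
    by_cases hΔ : ∃ φ ψ, imp φ ψ ∈ Δ
    · obtain ⟨φ, ψ, hmem⟩ := hΔ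
      obtain ⟨Δ, rfl⟩ := exists_cons_of_mem hmem
      have h' := inv_impR_nsmul n (Δ := n • Δ) (h.of_eq rfl (by rw [← singleton_add, smul_add]))
      refine (impR (ih _ ?_ (h'.of_eq (smul_add _ _ _).symm (smul_add _ _ _).symm) rfl)).of_eq
        rfl (by rw [← singleton_add])
      rw [← hm]
      simp only [Multiset.map_add, map_cons, map_singleton, sum_add, sum_cons, sum_singleton,
        impCount]
      omega
    simp only [not_exists] at hΓ hΔ
    exact of_nsmul_of_forall_not_imp hn hΓ hΔ h

end GKAmR

/-- The rule (SC_n) is GK(A_m)^r-admissible: for every n ≥ 2, if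
nΓ ⇒ nΔ is GK(A_m)^r-derivable, then Γ ⇒ Δ is GK(A_m)^r-derivable. -/
theorem stmt_10 (n : ℕ) (hn : 2 ≤ n) (Γ Δ : Multiset FormM)
    (h : GKAmR (n • Γ, n • Δ)) : GKAmR (Γ, Δ) :=
  GKAmR.of_nsmul (by omega) h
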